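/- Let w = (f,h) ∈ W = K ≀_Γ H and a = (s,t) ∈ W. Then the territory decomposition satisfies P(w^a) = P(w)^t, and in particular terr(w^a) = terr(w)^t. -/
import Mathlib

set_option linter.unusedSectionVars false

/-- The wreath product `K ≀_Γ Sym(Γ)` (with right-action conventions from the paper):
multiplication `(f,h)(e,g) = (f · e^{h⁻¹}, hg)` where `[γ](f·e^{h⁻¹}) = [γ]f * [γ^h]e`. -/
structure Wr (K : Type*) (Γ : Type*) where
  base : Γ → K
  top : Equiv.Perm Γ

namespace Wr

variable {K Γ : Type*} [Group K]

theorem ext' {w v : Wr K Γ} (h1 : w.base = v.base) (h2 : w.top = v.top) : w = v := by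
  cases w; cases v; cases h1; cases h2; rfl

instance : Group (Wr K Γ) where
  mul w v := ⟨fun γ => w.base γ * v.base (w.top γ), w.top.trans v.top⟩
  one := ⟨fun _ => 1, 1⟩
  inv w := ⟨fun γ => (w.base (w.top⁻¹ γ))⁻¹, w.top⁻¹⟩
  mul_assoc a b c := ext' (funext fun γ => mul_assoc _ _ _) (Equiv.trans_assoc _ _ _)
  one_mul a := ext' (funext fun γ => one_mul _) (Equiv.refl_trans _)
  mul_one a := ext' (funext fun γ => mul_one _) (Equiv.trans_refl _)
  inv_mul_cancel a := ext' (funext fun γ => inv_mul_cancel _) (Equiv.symm_trans_self _)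

/-- The support of a permutation, as a set. -/
def psupp (h : Equiv.Perm Γ) : Set Γ := {γ | h γ ≠ γ}

/-- The territory of a wreath product element. -/
def terr (w : Wr K Γ) : Set Γ := psupp w.top ∪ {γ | w.base γ ≠ 1}

/-- Wreath cycles: either trivial top and a singleton territory, or the top is a
single nontrivial cycle and the territory equals its support. -/
def IsWreathCycle (w : Wr K Γ) : Prop :=
  (w.top = 1 ∧ ∃ γ₀, terr w = {γ₀}) ∨ (w.top.IsCycle ∧ terr w = psupp w.top)

/-- The yade of `w` at `γ`: the ordered product `∏_{i=0}^{|h|-1} [γ^{h^i}]f`. -/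
noncomputable def yade (w : Wr K Γ) (γ : Γ) : K :=
  ((List.range (orderOf w.top)).map fun i => w.base ((w.top ^ i) γ)).prod

end Wr

open Wr

namespace Wr

variable {K Γ : Type*} [Group K] [Fintype Γ] [DecidableEq Γ]

/-- The load of a wreath cycle: the conjugacy class of its yades over the territory,
together with the order of the top component. -/
noncomputable def load (z : Wr K Γ) : Set K × ℕ :=
  ({x | ∃ γ ∈ terr z, IsConj (yade z γ) x}, orderOf z.top)

/-- The set of wreath cycles occurring in the disjoint wreath cycle decomposition of `w`. -/
def wCycles (w : Wr K Γ) : Set (Wr K Γ) :=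
  {z | ∃ c ∈ w.top.cycleFactorsFinset,
        z = Wr.mk (fun γ => if c γ ≠ γ then w.base γ else 1) c} ∪
  {z | ∃ γ₀, w.top γ₀ = γ₀ ∧ w.base γ₀ ≠ 1 ∧
        z = Wr.mk (fun γ => if γ = γ₀ then w.base γ else 1) 1}

/-- The territory decomposition `P(w)`: for each load `L`, the set of territories of
the wreath cycles of `w` of load `L`. -/
noncomputable def tdecomp (w : Wr K Γ) : Set K × ℕ → Set (Set Γ) :=
  fun L => {Ω | ∃ z ∈ wCycles w, load z = L ∧ Ω = terr z}

end Wr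

namespace Wr

section AuxBasic

variable {K Γ : Type*} [Group K]

lemma mul_base'' (w v : Wr K Γ) (γ : Γ) : (w * v).base γ = w.base γ * v.base (w.top γ) := rfl

lemma mul_top'' (w v : Wr K Γ) (γ : Γ) : (w * v).top γ = v.top (w.top γ) := rfl

lemma inv_base'' (w : Wr K Γ) (γ : Γ) : (w⁻¹).base γ = (w.base (w.top⁻¹ γ))⁻¹ := rfl

lemma inv_top'' (w : Wr K Γ) : (w⁻¹).top = w.top⁻¹ := rfl

lemma conj_eq_one_iff'' {x y : K} : y⁻¹ * x * y = 1 ↔ x = 1 := by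
  constructor
  · intro h
    have := congrArg (fun z => y * z * y⁻¹) h
    simpa [mul_assoc] using this
  · rintro rfl; simp

lemma conj_top (a w : Wr K Γ) : (a⁻¹ * w * a).top = a.top * w.top * a.top⁻¹ := by
  apply Equiv.ext; intro γ
  simp [mul_top'', inv_top'', Equiv.Perm.mul_apply]

lemma conj_top_apply (a w : Wr K Γ) (δ : Γ) :
    (a⁻¹ * w * a).top (a.top δ) = a.top (w.top δ) := by
  rw [conj_top]; simp

lemma conj_base (a w : Wr K Γ) (δ : Γ) :
    (a⁻¹ * w * a).base (a.top δ) = (a.base δ)⁻¹ * w.base δ * a.base (w.top δ) := by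
  show ((a⁻¹ * w) * a).base (a.top δ) = _
  rw [mul_base'', mul_base'', inv_base'', mul_top'', inv_top'']
  simp [mul_assoc]

lemma mem_terr'' {w : Wr K Γ} {γ : Γ} : γ ∈ terr w ↔ w.top γ ≠ γ ∨ w.base γ ≠ 1 := Iff.rfl

lemma terr_conj (a w : Wr K Γ) : terr (a⁻¹ * w * a) = ⇑a.top '' terr w := by
  have key : ∀ δ : Γ, (a.top δ ∈ terr (a⁻¹ * w * a) ↔ δ ∈ terr w) := by
    intro δ
    rw [mem_terr'', mem_terr'', conj_base, conj_top_apply]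
    by_cases ht : w.top δ = δ
    · rw [ht]
      simp [conj_eq_one_iff'']
    · exact iff_of_true (Or.inl fun he => ht (a.top.injective he)) (Or.inl ht)
  ext γ
  rw [Set.mem_image_equiv, ← key (a.top.symm γ), a.top.apply_symm_apply]

end AuxBasic

section AuxFin

variable {K Γ : Type*} [Group K] [Fintype Γ] [DecidableEq Γ]

lemma conj_wCycle_cycle (a w : Wr K Γ) (c : Equiv.Perm Γ) (hc : c ∈ w.top.cycleFactorsFinset) :
    a⁻¹ * (Wr.mk (fun γ => if c γ ≠ γ then w.base γ else 1) c) * a =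
      Wr.mk (fun γ => if (a.top * c * a.top⁻¹) γ ≠ γ then (a⁻¹ * w * a).base γ else 1)
        (a.top * c * a.top⁻¹) := by
  apply ext'
  · funext γ
    have hδ : γ = a.top (a.top.symm γ) := (a.top.apply_symm_apply γ).symm
    rw [hδ]
    set δ := a.top.symm γ with hδdef
    rw [conj_base]
    dsimp only
    have hcond : ((a.top * c * a.top⁻¹) (a.top δ) ≠ a.top δ) ↔ (c δ ≠ δ) := by
      simp [Equiv.Perm.mul_apply, a.top.injective.ne_iff]
    by_cases h : c δ ≠ δ
    · rw [if_pos h, if_pos (hcond.mpr h), conj_base]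
      have hcw : c δ = w.top δ := (Equiv.Perm.mem_cycleFactorsFinset_iff.mp hc).2 δ
        (Equiv.Perm.mem_support.mpr h)
      rw [hcw]
    · push_neg at h
      rw [if_neg (by simpa [hcond] using h), if_neg (by simpa using h), h]
      simp
  · rw [conj_top]

lemma conj_wCycle_fix (a w : Wr K Γ) (γ₀ : Γ) (h1 : w.top γ₀ = γ₀) :
    a⁻¹ * (Wr.mk (fun γ => if γ = γ₀ then w.base γ else 1) 1) * a =
      Wr.mk (fun γ => if γ = a.top γ₀ then (a⁻¹ * w * a).base γ else 1) 1 := by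
  apply ext'
  · funext γ
    have hδ : γ = a.top (a.top.symm γ) := (a.top.apply_symm_apply γ).symm
    rw [hδ]
    set δ := a.top.symm γ with hδdef
    rw [conj_base]
    dsimp only
    have hcond : (a.top δ = a.top γ₀) ↔ (δ = γ₀) := a.top.injective.eq_iff
    by_cases h : δ = γ₀
    · rw [if_pos h, if_pos (hcond.mpr h), conj_base, h]
      simp [h1]
    · rw [if_neg h, if_neg (by simpa [hcond] using h)]
      simp
  · rw [conj_top]
    dsimp only
    simp

lemma conj_mem_wCycles (a w : Wr K Γ) {z : Wr K Γ} (hz : z ∈ wCycles w) :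
    a⁻¹ * z * a ∈ wCycles (a⁻¹ * w * a) := by
  rcases hz with ⟨c, hc, rfl⟩ | ⟨γ₀, h1, h2, rfl⟩
  · left
    refine ⟨a.top * c * a.top⁻¹, ?_, ?_⟩
    · rw [conj_top]
      exact (Equiv.Perm.mem_cycleFactorsFinset_conj _ _ _).mpr hc
    · exact conj_wCycle_cycle a w c hc
  · right
    refine ⟨a.top γ₀, ?_, ?_, conj_wCycle_fix a w γ₀ h1⟩
    · rw [conj_top_apply, h1]
    · rw [conj_base, h1]
      intro h
      exact h2 (conj_eq_one_iff''.mp h)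

lemma wCycles_conj (a w : Wr K Γ) :
    wCycles (a⁻¹ * w * a) = (fun z => a⁻¹ * z * a) '' wCycles w := by
  ext z'
  constructor
  · intro h
    refine ⟨a * z' * a⁻¹, ?_, by group⟩
    have h2 := conj_mem_wCycles a⁻¹ (a⁻¹ * w * a) h
    have e1 : (a⁻¹)⁻¹ * z' * a⁻¹ = a * z' * a⁻¹ := by group
    have e2 : (a⁻¹)⁻¹ * (a⁻¹ * w * a) * a⁻¹ = w := by group
    rwa [e1, e2] at h2
  · rintro ⟨z, hz, rfl⟩
    exact conj_mem_wCycles a w hz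

lemma orderOf_conj_top (a w : Wr K Γ) : orderOf (a⁻¹ * w * a).top = orderOf w.top := by
  rw [conj_top]
  have hsc : SemiconjBy a.top w.top (a.top * w.top * a.top⁻¹) := by
    unfold SemiconjBy; group
  exact (SemiconjBy.orderOf_eq a.top hsc).symm

lemma prod_telescope (a z : Wr K Γ) (γ : Γ) : ∀ n : ℕ,
    ((List.range n).map fun i =>
        (a.base ((z.top ^ i) γ))⁻¹ * z.base ((z.top ^ i) γ) * a.base ((z.top ^ (i + 1)) γ)).prod
      = (a.base γ)⁻¹ * ((List.range n).map fun i => z.base ((z.top ^ i) γ)).prod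
          * a.base ((z.top ^ n) γ)
  | 0 => by simp
  | n + 1 => by
    rw [List.range_succ, List.map_append, List.prod_append, List.map_append, List.prod_append,
      prod_telescope a z γ n]
    simp [mul_assoc]

lemma yade_conj (a z : Wr K Γ) (γ : Γ) :
    yade (a⁻¹ * z * a) (a.top γ) = (a.base γ)⁻¹ * yade z γ * a.base γ := by
  unfold yade
  rw [orderOf_conj_top]
  have hstep : ∀ i : ℕ, (a⁻¹ * z * a).base (((a⁻¹ * z * a).top ^ i) (a.top γ)) =
      (a.base ((z.top ^ i) γ))⁻¹ * z.base ((z.top ^ i) γ) * a.base ((z.top ^ (i + 1)) γ) := by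
    intro i
    have htopi : ((a⁻¹ * z * a).top ^ i) (a.top γ) = a.top ((z.top ^ i) γ) := by
      rw [conj_top, conj_pow]
      simp [Equiv.Perm.mul_apply]
    rw [htopi, conj_base, pow_succ', Equiv.Perm.mul_apply]
  simp only [hstep]
  rw [prod_telescope]
  simp [pow_orderOf_eq_one]

lemma load_conj (a z : Wr K Γ) : load (a⁻¹ * z * a) = load z := by
  have hyc : ∀ δ : Γ, IsConj (yade (a⁻¹ * z * a) (a.top δ)) (yade z δ) := by
    intro δ
    rw [yade_conj]
    exact isConj_iff.mpr ⟨a.base δ, by group⟩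
  unfold load
  rw [orderOf_conj_top]
  refine congrArg (fun S => (S, orderOf z.top)) ?_
  ext x
  simp only [Set.mem_setOf_eq, terr_conj]
  constructor
  · rintro ⟨γ, hγ, hconj⟩
    rcases hγ with ⟨δ, hδ, rfl⟩
    exact ⟨δ, hδ, (hyc δ).symm.trans hconj⟩
  · rintro ⟨δ, hδ, hconj⟩
    exact ⟨a.top δ, ⟨δ, hδ, rfl⟩, (hyc δ).trans hconj⟩

end AuxFin

end Wr

/-- `P(w^a) = P(w)^t` and in particular `terr(w^a) = terr(w)^t`. -/
theorem tdecomp_conj {K Γ : Type*} [Group K] [Fintype Γ] [DecidableEq Γ]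
    (H : Subgroup (Equiv.Perm Γ)) (w a : Wr K Γ)
    (hw : w.top ∈ H) (ha : a.top ∈ H) :
    (∀ L : Set K × ℕ,
        tdecomp (a⁻¹ * w * a) L = (fun Ω => (⇑a.top) '' Ω) '' tdecomp w L) ∧
      terr (a⁻¹ * w * a) = (⇑a.top) '' terr w := by
  refine ⟨?_, terr_conj a w⟩
  intro L
  ext Ω
  simp only [tdecomp, wCycles_conj a w, Set.mem_setOf_eq, Set.mem_image]
  constructor
  · rintro ⟨z', ⟨z, hz, rfl⟩, hL, rfl⟩
    exact ⟨terr z, ⟨z, hz, by rwa [load_conj] at hL, rfl⟩, (terr_conj a z).symm⟩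
  · rintro ⟨Ω₀, ⟨z, hz, hL, rfl⟩, rfl⟩
    exact ⟨a⁻¹ * z * a, ⟨z, hz, rfl⟩, by rw [load_conj]; exact hL, (terr_conj a z).symm⟩
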